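/- The stochastic transition relation of the Stochastic Brane Calculus respects structural congruence: if M ≡ N and M → μ, then N → μ. -/

import Mathlib

open MeasureTheory
open scoped ENNReal

namespace Brane

/-- Action names Λ (a countable set). -/
abbrev Name := ℕ
/-- Node names (for compartments), a countable set disjoint from Λ. -/
abbrev NName := ℕ

/-- Membranes of the Brane Calculus. -/
inductive Membrane : Type
  | zero : Membrane
  | par : Membrane → Membrane → Membrane
  | phago : Name → Membrane → Membrane
  | cophago : Name → Membrane → Membrane → Membrane  -- cophago n τ σ = ⊥phago_n(τ).σ
  | exo : Name → Membrane → Membrane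
  | coexo : Name → Membrane → Membrane
  | pino : Name → Membrane → Membrane → Membrane     -- pino n τ σ = pino_n(τ).σ
deriving DecidableEq

/-- Systems of the Brane Calculus. -/
inductive System : Type
  | void : System
  | comp : System → System → System
  | cell : Membrane → System → System
deriving DecidableEq

/-- Structural congruence on membranes. -/
inductive MCong : Membrane → Membrane → Prop
  | refl (σ) : MCong σ σ
  | symm {σ τ} : MCong σ τ → MCong τ σ
  | trans {σ τ ρ} : MCong σ τ → MCong τ ρ → MCong σ ρ
  | parComm (σ τ) : MCong (Membrane.par σ τ) (Membrane.par τ σ)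
  | parAssoc (σ τ ρ) : MCong (Membrane.par σ (Membrane.par τ ρ)) (Membrane.par (Membrane.par σ τ) ρ)
  | parZero (σ) : MCong (Membrane.par σ .zero) σ
  | par {σ τ} (ρ) : MCong σ τ → MCong (Membrane.par σ ρ) (Membrane.par τ ρ)
  | phago (n) {σ τ} : MCong σ τ → MCong (.phago n σ) (.phago n τ)
  | exo (n) {σ τ} : MCong σ τ → MCong (.exo n σ) (.exo n τ)
  | coexo (n) {σ τ} : MCong σ τ → MCong (.coexo n σ) (.coexo n τ)
  | cophago (n) {ρ ν σ τ} : MCong ρ ν → MCong σ τ → MCong (.cophago n ρ σ) (.cophago n ν τ)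
  | pino (n) {ρ ν σ τ} : MCong ρ ν → MCong σ τ → MCong (.pino n ρ σ) (.pino n ν τ)

/-- Structural congruence on systems. -/
inductive SCong : System → System → Prop
  | refl (P) : SCong P P
  | symm {P Q} : SCong P Q → SCong Q P
  | trans {P Q R} : SCong P Q → SCong Q R → SCong P R
  | compComm (P Q) : SCong (System.comp P Q) (System.comp Q P)
  | compAssoc (P Q R) : SCong (System.comp P (System.comp Q R)) (System.comp (System.comp P Q) R)
  | compVoid (P) : SCong (System.comp P .void) P
  | zeroVoid : SCong (System.cell .zero .void) .void
  | comp {P Q} (R) : SCong P Q → SCong (System.comp P R) (System.comp Q R)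
  | cell {σ τ P Q} : MCong σ τ → SCong P Q → SCong (.cell σ P) (.cell τ Q)

/-- ≡-equivalence class of a membrane. -/
def mcls (σ : Membrane) : Set Membrane := {τ | MCong σ τ}
/-- ≡-equivalence class of a system. -/
def scls (P : System) : Set System := {Q | SCong P Q}

/-- The σ-algebra Π on membranes, generated by the ≡-classes. -/
instance : MeasurableSpace Membrane := .generateFrom {S | ∃ σ, S = mcls σ}
/-- The σ-algebra Π on systems, generated by the ≡-classes. -/
instance : MeasurableSpace System := .generateFrom {S | ∃ P, S = scls P}

/-- The reduction relation of the Brane Calculus. -/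
inductive React : System → System → Prop
  | phago {n ρ τ τ₀ σ σ₀ P Q} :
      React (.comp (.cell ((Membrane.cophago n ρ τ).par τ₀) Q)
                   (.cell ((Membrane.phago n σ).par σ₀) P))
            (.cell (Membrane.par τ τ₀) (.comp (.cell ρ (.cell (Membrane.par σ σ₀) P)) Q))
  | exo {n τ τ₀ σ σ₀ P Q} :
      React (.cell ((Membrane.coexo n τ).par τ₀)
                   (.comp (.cell ((Membrane.exo n σ).par σ₀) P) Q))
            (.comp (.cell (Membrane.par (Membrane.par σ σ₀) (Membrane.par τ τ₀)) Q) P)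
  | pino {n ρ σ σ₀ P} :
      React (.cell ((Membrane.pino n ρ σ).par σ₀) P)
            (.cell (Membrane.par σ σ₀) (.comp (.cell ρ .void) P))
  | loc {P Q} (σ) : React P Q → React (.cell σ P) (.cell σ Q)
  | comp {P Q} (R) : React P Q → React (.comp P R) (.comp Q R)
  | equiv {P P' Q Q'} : SCong P P' → React P' Q' → SCong Q' Q → React P Q

/-- Membrane action labels A_mem. -/
inductive MLabel : Type
  | phago : Name → MLabel
  | exo : Name → MLabel
  | coexo : Name → MLabel
  | cophago : Name → MLabel
  | pino : Name → MLabel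
deriving DecidableEq

/-- System action labels A_sys. -/
inductive SLabel : Type
  | id : SLabel
  | ph : Name → SLabel
  | phB : Name → SLabel
  | ex : Name → SLabel
deriving DecidableEq

/-- Target (product) space of a membrane label, according to its arity. -/
def MLabel.T : MLabel → Type
  | .phago _ => Membrane
  | .exo _ => Membrane
  | .coexo _ => Membrane
  | .cophago _ => Membrane × Membrane
  | .pino _ => Membrane × Membrane

/-- Target (product) space of a system label, according to its arity. -/
def SLabel.T : SLabel → Type
  | .id => System
  | .ph _ => System × System
  | .phB _ => Membrane × Membrane × System × System
  | .ex _ => Membrane × System × System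

instance (a : MLabel) : MeasurableSpace a.T := by
  cases a <;> (dsimp [MLabel.T]; infer_instance)

instance (a : SLabel) : MeasurableSpace a.T := by
  cases a <;> (dsimp [SLabel.T]; infer_instance)

/-- A_mem-indexed families of measures Δ^{A_mem}(B,Π). -/
abbrev MMeas := ∀ a : MLabel, Measure a.T
/-- A_sys-indexed families of measures Δ^{A_sys}(B,Π). -/
abbrev SMeas := ∀ a : SLabel, Measure a.T

/-- Prefix constant [phago_n]_σ. -/
noncomputable def phagoMeas (ι : Name → ℝ≥0∞) (n : Name) (σ : Membrane) : MMeas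
  | .phago m => if n = m then ι n • Measure.dirac σ else 0
  | .exo _ => 0
  | .coexo _ => 0
  | .cophago _ => 0
  | .pino _ => 0

/-- Prefix constant [exo_n]_σ. -/
noncomputable def exoMeas (ι : Name → ℝ≥0∞) (n : Name) (σ : Membrane) : MMeas
  | .exo m => if n = m then ι n • Measure.dirac σ else 0
  | .phago _ => 0
  | .coexo _ => 0
  | .cophago _ => 0
  | .pino _ => 0

/-- Prefix constant [coexo_n]_σ. -/
noncomputable def coexoMeas (ι : Name → ℝ≥0∞) (n : Name) (σ : Membrane) : MMeas
  | .coexo m => if n = m then ι n • Measure.dirac σ else 0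
  | .phago _ => 0
  | .exo _ => 0
  | .cophago _ => 0
  | .pino _ => 0

/-- Prefix constant [cophago_n]_σ^τ. -/
noncomputable def cophagoMeas (ι : Name → ℝ≥0∞) (n : Name) (τ σ : Membrane) : MMeas
  | .cophago m => if n = m then ι n • Measure.dirac (σ, τ) else 0
  | .phago _ => 0
  | .exo _ => 0
  | .coexo _ => 0
  | .pino _ => 0

/-- Prefix constant [pino_n]_σ^τ. -/
noncomputable def pinoMeas (ι : Name → ℝ≥0∞) (n : Name) (τ σ : Membrane) : MMeas
  | .pino m => if n = m then ι n • Measure.dirac (σ, τ) else 0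
  | .phago _ => 0
  | .exo _ => 0
  | .coexo _ => 0
  | .cophago _ => 0

/-- The parallel operator μ ⊕_{σ,τ} μ' on A_mem-indexed families of measures. -/
noncomputable def mpar (μ μ' : MMeas) (σ τ : Membrane) : MMeas
  | .phago n => (μ (.phago n)).map (fun ρ => ρ.par τ) + (μ' (.phago n)).map (fun ρ => ρ.par σ)
  | .exo n => (μ (.exo n)).map (fun ρ => ρ.par τ) + (μ' (.exo n)).map (fun ρ => ρ.par σ)
  | .coexo n => (μ (.coexo n)).map (fun ρ => ρ.par τ) + (μ' (.coexo n)).map (fun ρ => ρ.par σ)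
  | .cophago n =>
      (μ (.cophago n)).map (fun p : Membrane × Membrane => (p.1.par τ, p.2)) +
      (μ' (.cophago n)).map (fun p : Membrane × Membrane => (p.1.par σ, p.2))
  | .pino n =>
      (μ (.pino n)).map (fun p : Membrane × Membrane => (p.1.par τ, p.2)) +
      (μ' (.pino n)).map (fun p : Membrane × Membrane => (p.1.par σ, p.2))

/-- The nesting operator μ ▹_{σ,P} ν on families of measures. -/
noncomputable def mnest (ι : Name → ℝ≥0∞) (μ : SMeas) (ν : MMeas) (σ : Membrane) (P : System) :
    SMeas
  | .ph n => (ν (.phago n) (mcls σ)) • Measure.dirac (System.cell σ P, System.void)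
  | .phB n =>
      ((ν (.cophago n)).prod (Measure.dirac (P, System.void))).map MeasurableEquiv.prodAssoc
  | .ex n => (ν (.exo n)).prod (Measure.dirac (P, System.void))
  | .id =>
      (μ .id).map (fun Q => System.cell σ Q) +
      Measure.sum (fun n : Name =>
        (ν (.pino n)).map (fun p : Membrane × Membrane =>
          System.cell p.1 ((System.cell p.2 System.void).comp P))) +
      Measure.sum (fun n : Name =>
        (ι n)⁻¹ •
          (((μ (.ex n)).prod (ν (.coexo n))).map
            (fun q : (Membrane × System × System) × Membrane =>
              (System.cell (q.1.1.par q.2) q.1.2.2).comp q.1.2.1)))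

/-- The composition operator μ ⊗_{P,Q} μ' on families of measures. -/
noncomputable def mcomp (ι : Name → ℝ≥0∞) (μ μ' : SMeas) (P Q : System) : SMeas
  | .ph n =>
      (μ (.ph n)).map (fun p : System × System => (p.1, p.2.comp Q)) +
      (μ' (.ph n)).map (fun p : System × System => (p.1, p.2.comp P))
  | .phB n =>
      (μ (.phB n)).map
        (fun p : Membrane × Membrane × System × System => (p.1, p.2.1, p.2.2.1, p.2.2.2.comp Q)) +
      (μ' (.phB n)).map
        (fun p : Membrane × Membrane × System × System => (p.1, p.2.1, p.2.2.1, p.2.2.2.comp P))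
  | .ex n =>
      (μ (.ex n)).map (fun p : Membrane × System × System => (p.1, p.2.1, p.2.2.comp Q)) +
      (μ' (.ex n)).map (fun p : Membrane × System × System => (p.1, p.2.1, p.2.2.comp P))
  | .id =>
      (μ .id).map (fun R => R.comp Q) + (μ' .id).map (fun R => R.comp P) +
      Measure.sum (fun n : Name =>
        (ι n)⁻¹ •
          (((μ (.ph n)).prod (μ' (.phB n))).map
            (fun q : (System × System) × (Membrane × Membrane × System × System) =>
              (System.cell q.2.1 ((System.cell q.2.2.1 q.1.1).comp q.2.2.2.1)).comp
                (q.1.2.comp q.2.2.2.2)))) +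
      Measure.sum (fun n : Name =>
        (ι n)⁻¹ •
          (((μ (.phB n)).prod (μ' (.ph n))).map
            (fun q : (Membrane × Membrane × System × System) × (System × System) =>
              (System.cell q.1.1 ((System.cell q.1.2.1 q.2.1).comp q.1.2.2.1)).comp
                (q.1.2.2.2.comp q.2.2))))

/-- The stochastic transition relation σ →_mem μ, given by the SOS rules
(zero), (pref), (pref-arg), (par). -/
inductive MTrans (ι : Name → ℝ≥0∞) : Membrane → MMeas → Prop
  | zero : MTrans ι .zero 0
  | phago {n σ} : MTrans ι (.phago n σ) (phagoMeas ι n σ)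
  | exo {n σ} : MTrans ι (.exo n σ) (exoMeas ι n σ)
  | coexo {n σ} : MTrans ι (.coexo n σ) (coexoMeas ι n σ)
  | cophago {n τ σ} : MTrans ι (.cophago n τ σ) (cophagoMeas ι n τ σ)
  | pino {n τ σ} : MTrans ι (.pino n τ σ) (pinoMeas ι n τ σ)
  | par {σ τ μ μ'} : MTrans ι σ μ → MTrans ι τ μ' → MTrans ι (Membrane.par σ τ) (mpar μ μ' σ τ)

/-- The stochastic transition relation P →_sys μ, given by the SOS rules
(void), (loc), (comp). -/
inductive STrans (ι : Name → ℝ≥0∞) : System → SMeas → Prop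
  | void : STrans ι .void 0
  | cell {σ P ν μ} : MTrans ι σ ν → STrans ι P μ → STrans ι (.cell σ P) (mnest ι μ ν σ P)
  | comp {P Q μ μ'} : STrans ι P μ → STrans ι Q μ' → STrans ι (System.comp P Q) (mcomp ι μ μ' P Q)

end Brane
namespace Brane

/-! ### Normal forms -/

/-- Compose `n` copies of `C` in front of `R`. -/
def prependCopies : ℕ → System → System → System
  | 0, _, R => R
  | n + 1, C, R => System.comp C (prependCopies n C R)

/-- `n` copies of `C` composed in parallel. -/
def copies (n : ℕ) (C : System) : System := prependCopies n C .void

/-- Systems in normal form: n₁·σ₁(|Q₁|) ∘ … ∘ n_k·σ_k(|Q_k|). -/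
inductive NF : Type
  | nil : NF
  | cons (n : ℕ) (σ : Membrane) (inner rest : NF) : NF

/-- Unfolding ⌈Q⌉ of a normal form into a system. -/
def NF.unfold : NF → System
  | .nil => .void
  | .cons n σ Q₁ Q₂ => prependCopies n (System.cell σ Q₁.unfold) Q₂.unfold

/-- The list of top-level cells of a normal form. -/
def NF.cellsList : NF → List (Membrane × NF)
  | .nil => []
  | .cons _ σ Q₁ Q₂ => (σ, Q₁) :: Q₂.cellsList

/-- Well-formedness of normal forms: positive multiplicities, subsystems in
normal form, and pairwise non-congruent top-level cells. -/
inductive NF.Good : NF → Prop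
  | nil : Good .nil
  | cons {n σ Q₁ Q₂} : 0 < n → Good Q₁ → Good Q₂ →
      (∀ p ∈ Q₂.cellsList, ¬ SCong (System.cell σ Q₁.unfold) (System.cell p.1 p.2.unfold)) →
      Good (.cons n σ Q₁ Q₂)

/-! ### Species -/

/-- Actions (prefix-headed membranes). -/
inductive Action : Type
  | phago : Name → Membrane → Action
  | cophago : Name → Membrane → Membrane → Action
  | exo : Name → Membrane → Action
  | coexo : Name → Membrane → Action
  | pino : Name → Membrane → Membrane → Action
deriving DecidableEq

/-- The membrane denoted by an action. -/
def Action.toMem : Action → Membrane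
  | .phago n σ => .phago n σ
  | .cophago n ρ σ => .cophago n ρ σ
  | .exo n σ => .exo n σ
  | .coexo n σ => .coexo n σ
  | .pino n ρ σ => .pino n ρ σ

/-- A species C(|^x_y|) : a complex located in compartment x with inner compartment y. -/
structure Species : Type where
  C : Finset Action
  x : NName
  y : NName
deriving DecidableEq

/-- Populations: finite multisets of species. -/
abbrev Population := Species →₀ ℕ

/-- Node names occurring in a population. -/
def pfnPop (S : Population) : Finset NName := S.support.biUnion fun I => {I.x, I.y}

/-- The function s(·) mapping a membrane to a complex. -/
def complexOf : Membrane → Finset Action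
  | .zero => ∅
  | .par σ τ => complexOf σ ∪ complexOf τ
  | .phago n σ => {Action.phago n σ}
  | .cophago n ρ σ => {Action.cophago n ρ σ}
  | .exo n σ => {Action.exo n σ}
  | .coexo n σ => {Action.coexo n σ}
  | .pino n ρ σ => {Action.pino n ρ σ}

/-- The translation species_{E,x}(Q) of a normal form into a species population
(relational because of the choice of fresh names). -/
inductive NFSpecies : Finset NName → NName → NF → Population → Prop
  | nil {E x} : NFSpecies E x .nil 0
  | cons {E : Finset NName} {x : NName} {n σ Q₁ Q₂ y J₁ J₂} :
      y ∉ E →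
      NFSpecies (insert y E) y Q₁ J₁ →
      NFSpecies E x Q₂ J₂ →
      (pfnPop J₁ ∩ pfnPop J₂ ⊆ {x}) →
      NFSpecies E x (.cons n σ Q₁ Q₂)
        (Finsupp.single ⟨complexOf σ, x, y⟩ n + J₁ + J₂)

/-- species_{∅,x}(P): translation of a system `P` (via a normal form of `P`)
into a species population located at `x`. -/
def SpeciesOfSys (x : NName) (P : System) (J : Population) : Prop :=
  ∃ Q : NF, NF.Good Q ∧ SCong Q.unfold P ∧ NFSpecies {x} x Q J

/-- A root name of a species population. -/
def IsRoot (S : Population) (x : NName) : Prop :=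
  (∃ I ∈ S.support, I.x = x) ∧ ∀ I ∈ S.support, I.y ≠ x

/-! ### Decoding -/

/-- Decoding ⟪C⟫ of a complex into a membrane. -/
noncomputable def decodeComplex (C : Finset Action) : Membrane :=
  (C.toList.map Action.toMem).foldr Membrane.par .zero

/-- The species of `S` located at `x`. -/
def speciesAt (S : Population) (x : NName) : Finset Species :=
  S.support.filter fun I => I.x = x

mutual
/-- Decoding ⟪S⟫_x of a species population into a system (relational; it is
defined exactly when the nesting structure of `S` below `x` is well founded). -/
inductive Decodes : Population → NName → System → Prop
  | mk {S : Population} {x : NName} {l : List Species} {P : System} :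
      l.Perm (speciesAt S x).toList → DecList S l P → Decodes S x P

/-- Decoding of a list of species (one top-level compartment each). -/
inductive DecList : Population → List Species → System → Prop
  | nil {S} : DecList S [] .void
  | cons {S : Population} {I : Species} {l : List Species} {P' Q : System} :
      Decodes S I.y P' → DecList S l Q →
      DecList S (I :: l)
        (System.comp (copies (S I) (System.cell (decodeComplex I.C) P')) Q)
end

end Brane
namespace Brane

/-! ### The COW Generic Stochastic Abstract Machine (Brane Calculus instance) -/

/-- A reaction O = (S₁, r, f, S₂); the global update function f is, in the Brane
Calculus instantiation, either the identity (`none`) or a substitution of node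
names T[w := x] (`some (w, x)`). -/
structure Reaction : Type where
  reac : Population
  rate : ℝ≥0∞
  upd : Option (NName × NName)
  prod : Population

/-- An activity: the scheduled time t' and the propensity a of a reaction. -/
abbrev Activity := ℝ × ℝ≥0∞

/-- The reaction map R, associating activities to reactions. -/
abbrev RMap := List (Reaction × Activity)

/-- A machine term E ⊢ (t, S, R). -/
structure MachTerm : Type where
  env : Finset NName
  time : ℝ
  pop : Population
  rxns : RMap

/-- A machine state (t, S, R). -/
abbrev MState := ℝ × Population × RMap

/-- S*(I): population of a species multiplied along the chain of enclosing
compartments up to the root. -/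
inductive StarPop (S : Population) : Species → ℕ → Prop
  | root {I} : (∀ J ∈ S.support, J.y ≠ I.x) → StarPop S I (S I)
  | step {I J m} : J ∈ S.support → J.y = I.x → StarPop S J m → StarPop S I (S I * m)

/-- The mass-action propensity of a reaction in population `S`. -/
def PropensityIs (O : Reaction) (S : Population) (a : ℝ≥0∞) : Prop :=
  ∃ g : Species → ℕ,
    (∀ I ∈ O.reac.support, StarPop S I (g I)) ∧
    a = O.rate * ∏ I ∈ O.reac.support, ((g I).choose (O.reac I) : ℝ≥0∞)

/-- init(L,(t,S,R)): schedule each reaction of `L` with its propensity in `S`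
and a stochastic delay. -/
def InitRel (t : ℝ) (S : Population) (L : List Reaction) (out : RMap) : Prop :=
  List.Forall₂
    (fun O q => q.1 = O ∧ PropensityIs O S q.2.2 ∧ ∃ d : ℝ, 0 ≤ d ∧ q.2.1 = t + d) L out

/-- updates(I,(t,S,R)): recompute the activities of the reactions involving `I`. -/
def UpdatesSpec (Iu : Species) (t : ℝ) (S : Population) (R out : RMap) : Prop :=
  List.Forall₂
    (fun p q => q.1 = p.1 ∧ PropensityIs p.1 S q.2.2 ∧
      (if t < p.2.1 then q.2.1 = t + ((p.2.2 / q.2.2).toReal) * (p.2.1 - t)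
       else ∃ d : ℝ, 0 ≤ d ∧ q.2.1 = t + d))
    (R.filter fun p => decide (0 < p.1.reac Iu)) out

open Classical in
/-- Right-biased union R ∪ R' of reaction maps. -/
noncomputable def override (R R' : RMap) : RMap :=
  R' ++ R.filter fun p => decide (∀ q ∈ R', q.1 ≠ p.1)

/-- The reactions of the Brane Calculus instantiation: unary pinocytosis and
binary exocytosis/phagocytosis reactions of the (new) species `I₁` against the
population `S`, with rates given by ι. -/
inductive ReactionOf (ι : Name → ℝ≥0∞) (E : Finset NName) (I₁ : Species) (S : Population) :
    Reaction → Prop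
  | pino {n ρ σ w} :
      Action.pino n ρ σ ∈ I₁.C → w ∉ E →
      ReactionOf ι E I₁ S
        ⟨Finsupp.single I₁ 1, ι n, none,
          Finsupp.single ⟨complexOf σ ∪ I₁.C.erase (.pino n ρ σ), I₁.x, I₁.y⟩ 1 +
          Finsupp.single ⟨complexOf ρ, I₁.y, w⟩ 1⟩
  | exoUp {n τ σ I₂} :
      I₂ ∈ S.support → Action.coexo n τ ∈ I₁.C → Action.exo n σ ∈ I₂.C → I₂.x = I₁.y →
      ReactionOf ι E I₁ S
        ⟨Finsupp.single I₁ 1 + Finsupp.single I₂ 1, ι n, some (I₂.y, I₁.x),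
          Finsupp.single
            ⟨(complexOf τ ∪ I₁.C.erase (.coexo n τ)) ∪ (complexOf σ ∪ I₂.C.erase (.exo n σ)),
              I₁.x, I₁.y⟩ 1⟩
  | exoDown {n τ σ I₂} :
      I₂ ∈ S.support → Action.coexo n τ ∈ I₂.C → Action.exo n σ ∈ I₁.C → I₁.x = I₂.y →
      ReactionOf ι E I₁ S
        ⟨Finsupp.single I₁ 1 + Finsupp.single I₂ 1, ι n, some (I₁.y, I₂.x),
          Finsupp.single
            ⟨(complexOf τ ∪ I₂.C.erase (.coexo n τ)) ∪ (complexOf σ ∪ I₁.C.erase (.exo n σ)),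
              I₂.x, I₂.y⟩ 1⟩
  | phagoL {n ρ τ σ I₂ w} :
      I₂ ∈ S.support → Action.cophago n ρ τ ∈ I₁.C → Action.phago n σ ∈ I₂.C →
      I₂.x = I₁.x → w ∉ E →
      ReactionOf ι E I₁ S
        ⟨Finsupp.single I₁ 1 + Finsupp.single I₂ 1, ι n, none,
          Finsupp.single ⟨complexOf τ ∪ I₁.C.erase (.cophago n ρ τ), I₁.x, I₁.y⟩ 1 +
          Finsupp.single ⟨complexOf ρ, I₁.y, w⟩ 1 +
          Finsupp.single ⟨complexOf σ ∪ I₂.C.erase (.phago n σ), w, I₂.y⟩ 1⟩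
  | phagoR {n ρ τ σ I₂ w} :
      I₂ ∈ S.support → Action.cophago n ρ τ ∈ I₂.C → Action.phago n σ ∈ I₁.C →
      I₂.x = I₁.x → w ∉ E →
      ReactionOf ι E I₁ S
        ⟨Finsupp.single I₁ 1 + Finsupp.single I₂ 1, ι n, none,
          Finsupp.single ⟨complexOf τ ∪ I₂.C.erase (.cophago n ρ τ), I₂.x, I₂.y⟩ 1 +
          Finsupp.single ⟨complexOf ρ, I₂.y, w⟩ 1 +
          Finsupp.single ⟨complexOf σ ∪ I₁.C.erase (.phago n σ), w, I₁.y⟩ 1⟩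

/-- `L` is (a representative listing of) reactions(I ↦ i, S). -/
def ReactionsSpec (ι : Name → ℝ≥0∞) (E : Finset NName) (I : Species) (S : Population)
    (L : List Reaction) : Prop :=
  (∀ O ∈ L, ReactionOf ι E I S O) ∧
  (∀ O, ReactionOf ι E I S O → ∃ O' ∈ L, O'.reac = O.reac ∧ O'.rate = O.rate)

/-- The operation I ↦ i ⊕ (t, S, R). -/
inductive OPlusOne (ι : Name → ℝ≥0∞) (E : Finset NName) : Species → ℕ → MState → MState → Prop
  | old {I : Species} {i : ℕ} {t S R out} :
      I ∈ S.support →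
      UpdatesSpec I t (S + Finsupp.single I i) R out →
      OPlusOne ι E I i (t, S, R) (t, S + Finsupp.single I i, override R out)
  | new {I : Species} {i : ℕ} {t S R L out} :
      I ∉ S.support →
      ReactionsSpec ι E I S L →
      InitRel t (S + Finsupp.single I i) L out →
      OPlusOne ι E I i (t, S, R) (t, S + Finsupp.single I i, R ++ out)

/-- The operation (t, S, R) ⊖ I ↦ i. -/
inductive OMinusOne : Species → ℕ → MState → MState → Prop
  | mk {I : Species} {i : ℕ} {t S R out} :
      i ≤ S I →
      UpdatesSpec I t (Finsupp.update S I (S I - i)) R out →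
      OMinusOne I i (t, S, R) (t, Finsupp.update S I (S I - i), override R out)

/-- Iterated ⊕ of a population listed as (species, multiplicity) pairs. -/
inductive OPlusStar (ι : Name → ℝ≥0∞) (E : Finset NName) :
    List (Species × ℕ) → MState → MState → Prop
  | nil {st} : OPlusStar ι E [] st st
  | cons {I i l st st' st''} :
      OPlusOne ι E I i st st' → OPlusStar ι E l st' st'' →
      OPlusStar ι E ((I, i) :: l) st st''

/-- Iterated ⊖ of a population listed as (species, multiplicity) pairs. -/
inductive OMinusStar : List (Species × ℕ) → MState → MState → Prop
  | nil {st} : OMinusStar [] st st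
  | cons {I i l st st' st''} :
      OMinusOne I i st st' → OMinusStar l st' st'' →
      OMinusStar ((I, i) :: l) st st''

/-- List the species of a population together with their multiplicities. -/
noncomputable def popToList (S : Population) : List (Species × ℕ) :=
  S.support.toList.map fun I => (I, S I)

/-- `Reach S x z`: compartment `z` is (hereditarily) nested inside compartment `x`. -/
inductive Reach (S : Population) : NName → NName → Prop
  | refl (x) : Reach S x x
  | step {x : NName} {I : Species} : Reach S x I.x → I ∈ S.support → Reach S x I.y

open Classical in
/-- The copy (under the renaming `g`) of the subtree of `S` rooted at `y`. -/
noncomputable def copySub (g : NName → NName) (S : Population) (y : NName) : Population :=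
  S.sum fun I n => if Reach S y I.x then Finsupp.single ⟨I.C, g I.x, g I.y⟩ n else 0

/-- dup(E ⊢ (t,S,R), y, y'): deep duplication of the subtree rooted at `y` as a
new subtree rooted at `y'`, initializing the reactions of the new species. -/
def DupRel (ι : Name → ℝ≥0∞) (E : Finset NName) (t : ℝ) (S : Population) (R : RMap)
    (y y' : NName) (E' : Finset NName) (S' : Population) (R' : RMap) : Prop :=
  ∃ g : NName → NName,
    g y = y' ∧
    (∀ z, Reach S y z → z ≠ y → g z ∉ E) ∧
    (∀ z w, Reach S y z → Reach S y w → g z = g w → z = w) ∧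
    S' = S + copySub g S y ∧
    E' = E ∪ pfnPop S' ∧
    ∃ L out,
      (∀ O ∈ L, ∃ I ∈ (copySub g S y).support, ReactionOf ι E' I S' O) ∧
      (∀ I ∈ (copySub g S y).support, ∀ O, ReactionOf ι E' I S' O →
        ∃ O' ∈ L, O'.reac = O.reac ∧ O'.rate = O.rate) ∧
      InitRel t S' L out ∧ R' = R ++ out

/-- Split the multiplicity of the species `I`, keeping `keep` instances with the
old inner name and giving the remaining instances a fresh inner name, and deep
copy the tree hanging below `I` for the new instances. -/
def SplitCopy (ι : Name → ℝ≥0∞) (m : MachTerm) (I : Species) (keep : ℕ) (fresh : NName)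
    (m' : MachTerm) : Prop :=
  fresh ∉ m.env ∧
  ∃ S₀ E' S' R',
    S₀ = Finsupp.update m.pop I keep + Finsupp.single ⟨I.C, I.x, fresh⟩ (m.pop I - keep) ∧
    DupRel ι (insert fresh m.env) m.time S₀ m.rxns I.y fresh E' S' R' ∧
    ∃ L out,
      ReactionsSpec ι E' ⟨I.C, I.x, fresh⟩ S₀ L ∧
      InitRel m.time S' L out ∧
      m' = ⟨E', m.time, S', R' ++ out⟩

/-- The parent-unfolding step of cow: if the compartment `y` lies inside a
compartment with multiplicity > 1, split off a private copy of the parent. -/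
def ParentSplit (ι : Name → ℝ≥0∞) (m : MachTerm) (y : NName) (m' : MachTerm) : Prop :=
  ((∀ Ip ∈ m.pop.support, Ip.y = y → m.pop Ip ≤ 1) ∧ m' = m) ∨
  (∃ Ip ∈ m.pop.support, Ip.y = y ∧ 1 < m.pop Ip ∧ ∃ y', SplitCopy ι m Ip 1 y' m')

/-- The cow step for a single reactant species `I` with multiplicity `j`. -/
def CowStep (ι : Name → ℝ≥0∞) (m : MachTerm) (Ij : Species × ℕ) (m' : MachTerm) : Prop :=
  ∃ m₁, ParentSplit ι m Ij.1.x m₁ ∧ ∃ z', SplitCopy ι m₁ Ij.1 Ij.2 z' m'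

/-- cow(E ⊢ (t,S,R), S₁): copy-on-write unfolding of all the compartments
occurring in the reactant population. -/
inductive CowRel (ι : Name → ℝ≥0∞) : MachTerm → List (Species × ℕ) → MachTerm → Prop
  | nil {m} : CowRel ι m [] m
  | cons {m Ij l m' m''} :
      CowStep ι m Ij m' → CowRel ι m' l m'' → CowRel ι m ((Ij.1, Ij.2) :: l) m''

/-- Apply a node-name substitution. -/
def rn : Option (NName × NName) → NName → NName
  | none, z => z
  | some (w, x), z => if z = w then x else z

def renSpecies (f : Option (NName × NName)) (I : Species) : Species :=
  ⟨I.C, rn f I.x, rn f I.y⟩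

noncomputable def renPop (f : Option (NName × NName)) (S : Population) : Population :=
  Finsupp.mapDomain (renSpecies f) S

noncomputable def renReaction (f : Option (NName × NName)) (O : Reaction) : Reaction :=
  ⟨renPop f O.reac, O.rate, O.upd, renPop f O.prod⟩

noncomputable def renRMap (f : Option (NName × NName)) (R : RMap) : RMap :=
  R.map fun p => (renReaction f p.1, p.2)

/-- Apply the global update function f of a reaction to a machine term. -/
noncomputable def applyUpd (f : Option (NName × NName)) (m : MachTerm) : MachTerm :=
  ⟨m.env.image (rn f), m.time, renPop f m.pop, renRMap f m.rxns⟩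

/-- The transition relation T →^{a,O} T' of the COWGSAM (with the Next Reaction
method and the identity normalization function). -/
inductive MachStep (ι : Name → ℝ≥0∞) : MachTerm → ℝ≥0∞ → Reaction → MachTerm → Prop
  | mk {m : MachTerm} {O : Reaction} {a : ℝ≥0∞} {t' : ℝ} {mc : MachTerm} {st₁ st₂ : MState} :
      (O, (t', a)) ∈ m.rxns →
      (∀ p ∈ m.rxns, t' ≤ p.2.1) →
      CowRel ι m (popToList O.reac) mc →
      OMinusStar (popToList O.reac) (t', mc.pop, mc.rxns) st₁ →
      OPlusStar ι mc.env (popToList O.prod) st₁ st₂ →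
      MachStep ι m a O
        (applyUpd O.upd ⟨mc.env ∪ pfnPop O.prod, st₂.1, st₂.2.1, st₂.2.2⟩)

/-- The initial machine term ⟦P⟧_x = fn(J) ⊢ J ⊕ (0, ∅, ∅), J = species_{∅,x}(P). -/
def InitMach (ι : Name → ℝ≥0∞) (x : NName) (P : System) (m : MachTerm) : Prop :=
  ∃ (J : Population) (st : MState),
    SpeciesOfSys x P J ∧
    OPlusStar ι (pfnPop J) (popToList J) (0, 0, []) st ∧
    m = ⟨pfnPop J, st.1, st.2.1, st.2.2⟩

end Brane

/-!
The σ-algebras on membranes and systems are generated by the ≡-classes of countable types, so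
their measurable atoms are exactly the ≡-classes. Hence no measure distinguishes congruent terms:
Dirac measures at congruent points coincide, and pushing a measure forward along two maps whose
values are pointwise congruent gives the same measure. The transition relations are graphs of
functions defined by structural recursion, and by this principle the operators ⊕, ▹ and ⊗
satisfy, as equalities of measures, the laws that generate ≡ (commutativity, associativity, unit,
congruence). Induction on ≡ then shows that congruent terms have the same transition measure.
-/

section MeasurableAtom

variable {α β γ : Type*} [MeasurableSpace α] [MeasurableSpace β] [MeasurableSpace γ]

lemma mem_measurableAtom_iff {x y : α} :
    y ∈ measurableAtom x ↔ ∀ s, MeasurableSet s → x ∈ s → y ∈ s := by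
  simp only [measurableAtom, Set.mem_iInter]
  exact forall_congr' fun _ => forall_comm

lemma mem_measurableAtom_comm {x y : α} : y ∈ measurableAtom x ↔ x ∈ measurableAtom y :=
  ⟨fun h => measurableAtom_eq_of_mem h ▸ mem_measurableAtom_self x,
   fun h => measurableAtom_eq_of_mem h ▸ mem_measurableAtom_self y⟩

lemma mem_measurableAtom_of_generateFrom {C : Set (Set α)}
    (hC : ‹MeasurableSpace α› = .generateFrom C) {x y : α} (h : ∀ s ∈ C, x ∈ s ↔ y ∈ s) :
    y ∈ measurableAtom x := by
  refine mem_measurableAtom_iff.2 fun s hs => ?_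
  rw [hC] at hs
  refine (MeasurableSpace.generateFrom_induction C (fun s _ => x ∈ s ↔ y ∈ s)
    (fun s hs _ => h s hs) Iff.rfl (fun _ _ ih => not_congr ih) (fun _ _ ih => ?_) s hs).1
  simp only [Set.mem_iUnion, ih]

@[simp]
lemma mem_measurableAtom_prod {p q : α × β} :
    q ∈ measurableAtom p ↔ q.1 ∈ measurableAtom p.1 ∧ q.2 ∈ measurableAtom p.2 := by
  refine ⟨fun h => ⟨?_, ?_⟩, fun ⟨h₁, h₂⟩ => mem_measurableAtom_iff.2 fun s hs hp => ?_⟩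
  · exact mem_measurableAtom_iff.2 fun s hs => mem_of_mem_measurableAtom h (measurable_fst hs)
  · exact mem_measurableAtom_iff.2 fun s hs => mem_of_mem_measurableAtom h (measurable_snd hs)
  have hq₂ : (p.1, q.2) ∈ s := mem_of_mem_measurableAtom h₂ (measurable_prodMk_left hs) hp
  exact mem_of_mem_measurableAtom h₁ (measurable_prodMk_right hs) hq₂

lemma measurable_of_mem_measurableAtom [Countable α] {f : α → β}
    (hf : ∀ x y, y ∈ measurableAtom x → f y ∈ measurableAtom (f x)) : Measurable f := by
  intro s hs
  have hunion : f ⁻¹' s = ⋃ x ∈ f ⁻¹' s, measurableAtom x :=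
    subset_antisymm (fun x hx => Set.mem_biUnion hx (mem_measurableAtom_self x))
      (Set.iUnion₂_subset fun x hx y hy => mem_of_mem_measurableAtom (hf x y hy) hs hx)
  rw [hunion]
  exact .biUnion (Set.to_countable _) fun x _ => .measurableAtom_of_countable x

namespace MeasureTheory.Measure

lemma map_congr_of_mem_measurableAtom {f g : α → β} (hf : Measurable f) (hg : Measurable g)
    (h : ∀ x, g x ∈ measurableAtom (f x)) (μ : Measure α) : μ.map f = μ.map g := by
  ext s hs
  rw [map_apply hf hs, map_apply hg hs]
  congr 1
  ext x
  exact ⟨fun hx => mem_of_mem_measurableAtom (h x) hs hx,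
    fun hx => mem_of_mem_measurableAtom (mem_measurableAtom_comm.1 (h x)) hs hx⟩

lemma map_eq_self_of_mem_measurableAtom {f : α → α} (hf : Measurable f)
    (h : ∀ x, f x ∈ measurableAtom x) (μ : Measure α) : μ.map f = μ :=
  (map_congr_of_mem_measurableAtom hf measurable_id
    (fun x => mem_measurableAtom_comm.1 (h x)) μ).trans map_id

lemma dirac_congr_of_mem_measurableAtom {x y : α} (h : y ∈ measurableAtom x) :
    dirac x = dirac y := by
  ext s hs
  simp only [dirac_apply' _ hs, Set.indicator, Pi.one_apply]
  congr 1
  exact propext ⟨fun hx => mem_of_mem_measurableAtom h hs hx,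
    fun hy => mem_of_mem_measurableAtom (mem_measurableAtom_comm.1 h) hs hy⟩

lemma map_prod_left (μ : Measure α) (ν : Measure β) [SFinite μ] [SFinite ν] {f : α → γ}
    (hf : Measurable f) : (μ.map f).prod ν = (μ.prod ν).map (Prod.map f id) := by
  simpa using map_prod_map μ ν hf measurable_id

lemma prod_map_right (μ : Measure α) (ν : Measure β) [SFinite μ] [SFinite ν] {g : β → γ}
    (hg : Measurable g) : μ.prod (ν.map g) = (μ.prod ν).map (Prod.map id g) := by
  simpa using map_prod_map μ ν measurable_id hg

lemma add_map_zero (μ : Measure β) (f : α → β) : μ + (0 : Measure α).map f = μ := by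
  rw [Measure.map_zero, add_zero]

lemma map_sum_smul {ι : Type*} {f : α → β} (hf : Measurable f) (w : ι → ℝ≥0∞)
    (μ : ι → Measure α) :
    (Measure.sum fun i => w i • μ i).map f = Measure.sum fun i => w i • (μ i).map f := by
  simp only [map_sum hf.aemeasurable, Measure.map_smul]

end MeasureTheory.Measure

end MeasurableAtom

/-- `act` is a right action of the monoid `(M, op, e)` on `α` up to measurable atoms, so that
`κ ↦ κ.map (act · X)` is an honest action on measures. -/
structure IsAtomAction {M α : Type*} [MeasurableSpace M] [MeasurableSpace α] (op : M → M → M)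
    (e : M) (act : α → M → α) : Prop where
  measurable (X : M) : Measurable (act · X)
  act_act (a : α) (X Y : M) : act (act a X) Y ∈ measurableAtom (act a (op X Y))
  act_unit (a : α) : act a e ∈ measurableAtom a
  act_congr (a : α) {X Y : M} (h : Y ∈ measurableAtom X) : act a Y ∈ measurableAtom (act a X)

namespace IsAtomAction

variable {M α β : Type*} [MeasurableSpace M] [MeasurableSpace α] [MeasurableSpace β]
  {op : M → M → M} {e : M} {act : α → M → α}

lemma prodFst (h : IsAtomAction op e act) :
    IsAtomAction op e fun (p : α × β) X => (act p.1 X, p.2) where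
  measurable X := ((h.measurable X).comp measurable_fst).prodMk measurable_snd
  act_act p X Y := mem_measurableAtom_prod.2 ⟨h.act_act p.1 X Y, mem_measurableAtom_self _⟩
  act_unit p := mem_measurableAtom_prod.2 ⟨h.act_unit p.1, mem_measurableAtom_self _⟩
  act_congr p _ _ hXY :=
    mem_measurableAtom_prod.2 ⟨h.act_congr p.1 hXY, mem_measurableAtom_self _⟩

lemma prodSnd (h : IsAtomAction op e act) :
    IsAtomAction op e fun (p : β × α) X => (p.1, act p.2 X) where
  measurable X := measurable_fst.prodMk ((h.measurable X).comp measurable_snd)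
  act_act p X Y := mem_measurableAtom_prod.2 ⟨mem_measurableAtom_self _, h.act_act p.2 X Y⟩
  act_unit p := mem_measurableAtom_prod.2 ⟨mem_measurableAtom_self _, h.act_unit p.2⟩
  act_congr p _ _ hXY :=
    mem_measurableAtom_prod.2 ⟨mem_measurableAtom_self _, h.act_congr p.2 hXY⟩

lemma map_map_act (h : IsAtomAction op e act) (κ : Measure α) (X Y : M) :
    (κ.map (act · X)).map (act · Y) = κ.map (act · (op X Y)) := by
  rw [Measure.map_map (h.measurable Y) (h.measurable X)]
  exact Measure.map_congr_of_mem_measurableAtom ((h.measurable Y).comp (h.measurable X))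
    (h.measurable _) (fun a => mem_measurableAtom_comm.1 (h.act_act a X Y)) κ

lemma map_act_unit (h : IsAtomAction op e act) (κ : Measure α) : κ.map (act · e) = κ :=
  Measure.map_eq_self_of_mem_measurableAtom (h.measurable e) h.act_unit κ

lemma map_act_congr (h : IsAtomAction op e act) (κ : Measure α) {X Y : M}
    (hXY : Y ∈ measurableAtom X) : κ.map (act · X) = κ.map (act · Y) :=
  Measure.map_congr_of_mem_measurableAtom (h.measurable X) (h.measurable Y)
    (fun a => h.act_congr a hXY) κ

lemma map_act_add_assoc (h : IsAtomAction op e act)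
    (hcomm : ∀ X Y : M, op Y X ∈ measurableAtom (op X Y)) (κ₁ κ₂ κ₃ : Measure α) (P Q R : M) :
    κ₁.map (act · (op Q R)) + (κ₂.map (act · R) + κ₃.map (act · Q)).map (act · P)
      = (κ₁.map (act · Q) + κ₂.map (act · P)).map (act · R) + κ₃.map (act · (op P Q)) := by
  rw [Measure.map_add _ _ (h.measurable P), Measure.map_add _ _ (h.measurable R),
    h.map_map_act, h.map_map_act, h.map_map_act, h.map_map_act,
    h.map_act_congr κ₂ (hcomm R P), h.map_act_congr κ₃ (hcomm Q P), add_assoc]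

end IsAtomAction

namespace Brane

-- Countability makes the ≡-classes measurable and every measure on these types s-finite.
deriving instance Countable for Membrane
deriving instance Countable for System

lemma MCong.par_congr {σ σ' τ τ' : Membrane} (h : MCong σ σ') (h' : MCong τ τ') :
    MCong (σ.par τ) (σ'.par τ') :=
  (MCong.par τ h).trans <|
    ((MCong.parComm σ' τ).trans (MCong.par σ' h')).trans (MCong.parComm τ' σ')

lemma SCong.comp_congr {P P' Q Q' : System} (h : SCong P P') (h' : SCong Q Q') :
    SCong (P.comp Q) (P'.comp Q') :=
  (SCong.comp Q h).trans <|
    ((SCong.compComm P' Q).trans (SCong.comp P' h')).trans (SCong.compComm Q' P')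

lemma SCong.comp_right_comm (P Q R : System) : SCong ((P.comp Q).comp R) ((P.comp R).comp Q) :=
  (SCong.compAssoc P Q R).symm.trans <|
    ((SCong.refl P).comp_congr (SCong.compComm Q R)).trans (SCong.compAssoc P R Q)

@[simp]
lemma Membrane.mem_measurableAtom {σ τ : Membrane} : τ ∈ measurableAtom σ ↔ MCong σ τ := by
  refine ⟨fun h => mem_of_mem_measurableAtom h ?_ (MCong.refl σ),
    fun h => mem_measurableAtom_of_generateFrom rfl ?_⟩
  · exact MeasurableSpace.measurableSet_generateFrom ⟨σ, rfl⟩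
  · rintro _ ⟨ρ, rfl⟩
    exact ⟨fun hσ => hσ.trans h, fun hτ => hτ.trans h.symm⟩

@[simp]
lemma System.mem_measurableAtom {P Q : System} : Q ∈ measurableAtom P ↔ SCong P Q := by
  refine ⟨fun h => mem_of_mem_measurableAtom h ?_ (SCong.refl P),
    fun h => mem_measurableAtom_of_generateFrom rfl ?_⟩
  · exact MeasurableSpace.measurableSet_generateFrom ⟨P, rfl⟩
  · rintro _ ⟨R, rfl⟩
    exact ⟨fun hP => hP.trans h, fun hQ => hQ.trans h.symm⟩

lemma mcls_congr {σ τ : Membrane} (h : MCong σ τ) : mcls σ = mcls τ :=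
  Set.ext fun _ => ⟨h.symm.trans, h.trans⟩

section Measurability

variable {α : Type*} [MeasurableSpace α]

@[fun_prop]
lemma Membrane.measurable_par {f g : α → Membrane} (hf : Measurable f) (hg : Measurable g) :
    Measurable fun x => (f x).par (g x) := by
  refine Measurable.comp (g := fun p : Membrane × Membrane => p.1.par p.2) ?_ (hf.prodMk hg)
  refine measurable_of_mem_measurableAtom fun p q h => ?_
  simp only [mem_measurableAtom_prod, Membrane.mem_measurableAtom] at h ⊢
  exact h.1.par_congr h.2

@[fun_prop]
lemma System.measurable_comp {f g : α → System} (hf : Measurable f) (hg : Measurable g) :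
    Measurable fun x => (f x).comp (g x) := by
  refine Measurable.comp (g := fun p : System × System => p.1.comp p.2) ?_ (hf.prodMk hg)
  refine measurable_of_mem_measurableAtom fun p q h => ?_
  simp only [mem_measurableAtom_prod, System.mem_measurableAtom] at h ⊢
  exact h.1.comp_congr h.2

@[fun_prop]
lemma System.measurable_cell {f : α → Membrane} {g : α → System} (hf : Measurable f)
    (hg : Measurable g) : Measurable fun x => System.cell (f x) (g x) := by
  refine Measurable.comp (g := fun p : Membrane × System => System.cell p.1 p.2) ?_
    (hf.prodMk hg)
  refine measurable_of_mem_measurableAtom fun p q h => ?_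
  simp only [mem_measurableAtom_prod, Membrane.mem_measurableAtom,
    System.mem_measurableAtom] at h ⊢
  exact SCong.cell h.1 h.2

end Measurability

lemma isAtomAction_par : IsAtomAction Membrane.par .zero Membrane.par where
  measurable _ := by fun_prop
  act_act σ X Y := Membrane.mem_measurableAtom.2 (MCong.parAssoc σ X Y)
  act_unit σ := Membrane.mem_measurableAtom.2 (MCong.parZero σ).symm
  act_congr σ _ _ h :=
    Membrane.mem_measurableAtom.2 ((MCong.refl σ).par_congr (Membrane.mem_measurableAtom.1 h))

lemma isAtomAction_comp : IsAtomAction System.comp .void System.comp where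
  measurable _ := by fun_prop
  act_act P X Y := System.mem_measurableAtom.2 (SCong.compAssoc P X Y)
  act_unit P := System.mem_measurableAtom.2 (SCong.compVoid P).symm
  act_congr P _ _ h :=
    System.mem_measurableAtom.2 ((SCong.refl P).comp_congr (System.mem_measurableAtom.1 h))

lemma mpar_comm (μ μ' : MMeas) (σ τ : Membrane) : mpar μ μ' σ τ = mpar μ' μ τ σ := by
  funext a
  cases a <;> exact add_comm _ _

lemma mpar_assoc (μ₁ μ₂ μ₃ : MMeas) (σ τ ρ : Membrane) :
    mpar (mpar μ₁ μ₂ σ τ) μ₃ (σ.par τ) ρ = mpar μ₁ (mpar μ₂ μ₃ τ ρ) σ (τ.par ρ) := by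
  have hcomm (X Y : Membrane) : Y.par X ∈ measurableAtom (X.par Y) :=
    Membrane.mem_measurableAtom.2 (.parComm X Y)
  funext a
  cases a
  case phago | exo | coexo =>
    exact (isAtomAction_par.map_act_add_assoc hcomm _ _ _ σ τ ρ).symm
  case cophago | pino =>
    exact (isAtomAction_par.prodFst.map_act_add_assoc hcomm _ _ _ σ τ ρ).symm

lemma mpar_zero (μ : MMeas) (σ : Membrane) : mpar μ 0 σ .zero = μ := by
  funext a
  cases a
  case phago | exo | coexo =>
    exact (Measure.add_map_zero _ _).trans (isAtomAction_par.map_act_unit _)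
  case cophago | pino =>
    exact (Measure.add_map_zero _ _).trans
      ((isAtomAction_par.prodFst (β := Membrane)).map_act_unit _)

lemma mpar_congr_left (μ μ' : MMeas) {σ τ : Membrane} (ρ : Membrane) (h : MCong σ τ) :
    mpar μ μ' σ ρ = mpar μ μ' τ ρ := by
  have h' := Membrane.mem_measurableAtom.2 h
  funext a
  cases a <;> refine congrArg (HAdd.hAdd _) ?_
  case phago | exo | coexo => exact isAtomAction_par.map_act_congr _ h'
  case cophago | pino => exact (isAtomAction_par.prodFst (β := Membrane)).map_act_congr _ h'

section Prefix

variable (ι : Name → ℝ≥0∞) (n : Name) {ρ ν σ τ : Membrane}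

lemma phagoMeas_congr (h : MCong σ τ) : phagoMeas ι n σ = phagoMeas ι n τ := by
  have hd := Measure.dirac_congr_of_mem_measurableAtom (Membrane.mem_measurableAtom.2 h)
  funext a
  cases a <;> simp only [phagoMeas, hd]

lemma exoMeas_congr (h : MCong σ τ) : exoMeas ι n σ = exoMeas ι n τ := by
  have hd := Measure.dirac_congr_of_mem_measurableAtom (Membrane.mem_measurableAtom.2 h)
  funext a
  cases a <;> simp only [exoMeas, hd]

lemma coexoMeas_congr (h : MCong σ τ) : coexoMeas ι n σ = coexoMeas ι n τ := by
  have hd := Measure.dirac_congr_of_mem_measurableAtom (Membrane.mem_measurableAtom.2 h)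
  funext a
  cases a <;> simp only [coexoMeas, hd]

lemma cophagoMeas_congr (h₁ : MCong ρ ν) (h₂ : MCong σ τ) :
    cophagoMeas ι n ρ σ = cophagoMeas ι n ν τ := by
  have hd := Measure.dirac_congr_of_mem_measurableAtom (x := (σ, ρ)) (y := (τ, ν))
    (by simpa using ⟨h₂, h₁⟩)
  funext a
  cases a <;> simp only [cophagoMeas, hd]

lemma pinoMeas_congr (h₁ : MCong ρ ν) (h₂ : MCong σ τ) :
    pinoMeas ι n ρ σ = pinoMeas ι n ν τ := by
  have hd := Measure.dirac_congr_of_mem_measurableAtom (x := (σ, ρ)) (y := (τ, ν))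
    (by simpa using ⟨h₂, h₁⟩)
  funext a
  cases a <;> simp only [pinoMeas, hd]

end Prefix

noncomputable def Membrane.transition (ι : Name → ℝ≥0∞) : Membrane → MMeas
  | .zero => 0
  | .par σ τ => mpar (σ.transition ι) (τ.transition ι) σ τ
  | .phago n σ => phagoMeas ι n σ
  | .cophago n τ σ => cophagoMeas ι n τ σ
  | .exo n σ => exoMeas ι n σ
  | .coexo n σ => coexoMeas ι n σ
  | .pino n τ σ => pinoMeas ι n τ σ

lemma mtrans_iff_eq_transition {ι : Name → ℝ≥0∞} {σ : Membrane} {μ : MMeas} :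
    MTrans ι σ μ ↔ μ = σ.transition ι := by
  refine ⟨fun h => ?_, ?_⟩
  · induction h with
    | par _ _ ih₁ ih₂ => rw [ih₁, ih₂]; rfl
    | _ => rfl
  · rintro rfl
    induction σ with
    | par σ τ ihσ ihτ => exact .par ihσ ihτ
    | _ => constructor

lemma Membrane.transition_congr (ι : Name → ℝ≥0∞) {σ τ : Membrane} (h : MCong σ τ) :
    σ.transition ι = τ.transition ι := by
  induction h with
  | refl => rfl
  | symm _ ih => exact ih.symm
  | trans _ _ ih₁ ih₂ => exact ih₁.trans ih₂
  | parComm σ τ => exact mpar_comm _ _ σ τ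
  | parAssoc σ τ ρ => exact (mpar_assoc _ _ _ σ τ ρ).symm
  | parZero σ => exact mpar_zero _ σ
  | par ρ h ih =>
    simp only [Membrane.transition, ih]
    exact mpar_congr_left _ _ ρ h
  | phago n h => exact phagoMeas_congr ι n h
  | exo n h => exact exoMeas_congr ι n h
  | coexo n h => exact coexoMeas_congr ι n h
  | cophago n h₁ h₂ => exact cophagoMeas_congr ι n h₁ h₂
  | pino n h₁ h₂ => exact pinoMeas_congr ι n h₁ h₂

lemma mnest_congr (ι : Name → ℝ≥0∞) (μ : SMeas) (ν : MMeas) {σ τ : Membrane} {P Q : System}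
    (hm : MCong σ τ) (hs : SCong P Q) : mnest ι μ ν σ P = mnest ι μ ν τ Q := by
  have hcell := Measure.dirac_congr_of_mem_measurableAtom (x := (System.cell σ P, System.void))
    (y := (System.cell τ Q, System.void)) (by simpa using SCong.cell hm hs)
  have hpair := Measure.dirac_congr_of_mem_measurableAtom (x := (P, System.void))
    (y := (Q, System.void)) (by simpa using hs)
  funext a
  cases a
  case ph n => simp only [mnest, mcls_congr hm, hcell]; rfl
  case phB n => simp only [mnest, hpair]
  case ex n => simp only [mnest, hpair]; rfl
  case id =>
    simp only [mnest]
    congr 2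
    · exact Measure.map_congr_of_mem_measurableAtom (by fun_prop) (by fun_prop)
        (fun R => by simpa using SCong.cell hm (SCong.refl R)) _
    · refine congrArg Measure.sum (funext fun n => ?_)
      exact Measure.map_congr_of_mem_measurableAtom (by fun_prop) (by fun_prop)
        (fun _ => by simpa using SCong.cell (MCong.refl _) ((SCong.refl _).comp_congr hs)) _

lemma mnest_zero (ι : Name → ℝ≥0∞) : mnest ι 0 0 .zero .void = 0 := by
  funext a
  cases a
  case ph n => exact zero_smul _ _
  case phB n => exact (congrArg _ (Measure.zero_prod _)).trans (Measure.map_zero _)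
  case ex n => exact Measure.zero_prod _
  case id =>
    show Measure.map _ (0 : Measure System) + Measure.sum (fun _ => Measure.map _ 0)
      + Measure.sum (fun n => (ι n)⁻¹ •
        Measure.map _ ((0 : Measure (Membrane × System × System)).prod 0)) = (0 : Measure System)
    simp

/-- The system left by a phagocytosis: `p = (C, R)` offers the cell `C` with sibling `R`, and
`q = (τ, ρ, Q, R')` a cell with membrane `τ` and content `Q` that wraps `C` in the membrane `ρ`,
with sibling `R'`. -/
def phagoResult (p : System × System) (q : Membrane × Membrane × System × System) : System :=
  (System.cell q.1 ((System.cell q.2.1 p.1).comp q.2.2.1)).comp (p.2.comp q.2.2.2)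

noncomputable def phagoJoin (κ : Measure (System × System))
    (κ' : Measure (Membrane × Membrane × System × System)) : Measure System :=
  (κ.prod κ').map fun z => phagoResult z.1 z.2

section PhagoJoin

variable (κ κ₁ κ₂ : Measure (System × System))
  (κ' κ'₁ κ'₂ : Measure (Membrane × Membrane × System × System))

lemma measurable_phagoResult :
    Measurable fun z : (System × System) × (Membrane × Membrane × System × System) =>
      phagoResult z.1 z.2 := by
  unfold phagoResult
  fun_prop

lemma phagoJoin_add_left : phagoJoin (κ₁ + κ₂) κ' = phagoJoin κ₁ κ' + phagoJoin κ₂ κ' := by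
  rw [phagoJoin, Measure.add_prod, Measure.map_add _ _ measurable_phagoResult]
  rfl

lemma phagoJoin_add_right : phagoJoin κ (κ'₁ + κ'₂) = phagoJoin κ κ'₁ + phagoJoin κ κ'₂ := by
  rw [phagoJoin, Measure.prod_add, Measure.map_add _ _ measurable_phagoResult]
  rfl

lemma phagoJoin_zero_left : phagoJoin 0 κ' = 0 := by
  rw [phagoJoin, Measure.zero_prod, Measure.map_zero]

lemma phagoJoin_zero_right : phagoJoin κ 0 = 0 := by
  rw [phagoJoin, Measure.prod_zero, Measure.map_zero]

lemma phagoJoin_map_left (X : System) :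
    phagoJoin (κ.map fun p => (p.1, p.2.comp X)) κ' = (phagoJoin κ κ').map (·.comp X) := by
  rw [phagoJoin, phagoJoin, Measure.map_prod_left _ _ (by fun_prop),
    Measure.map_map measurable_phagoResult (by fun_prop),
    Measure.map_map (by fun_prop) measurable_phagoResult]
  refine Measure.map_congr_of_mem_measurableAtom (by unfold phagoResult; fun_prop)
    (by unfold phagoResult; fun_prop) (fun z => ?_) _
  simpa [phagoResult] using
    ((SCong.refl _).comp_congr (SCong.comp_right_comm _ _ _)).trans (SCong.compAssoc _ _ _)

lemma phagoJoin_map_right (X : System) :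
    phagoJoin κ (κ'.map fun q => (q.1, q.2.1, q.2.2.1, q.2.2.2.comp X))
      = (phagoJoin κ κ').map (·.comp X) := by
  rw [phagoJoin, phagoJoin, Measure.prod_map_right _ _ (by fun_prop),
    Measure.map_map measurable_phagoResult (by fun_prop),
    Measure.map_map (by fun_prop) measurable_phagoResult]
  refine Measure.map_congr_of_mem_measurableAtom (by unfold phagoResult; fun_prop)
    (by unfold phagoResult; fun_prop) (fun z => ?_) _
  simpa [phagoResult] using
    ((SCong.refl _).comp_congr (SCong.compAssoc _ _ _)).trans (SCong.compAssoc _ _ _)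

lemma map_prod_phagoResult_swap :
    (κ'.prod κ).map (fun q : (Membrane × Membrane × System × System) × (System × System) =>
      (System.cell q.1.1 ((System.cell q.1.2.1 q.2.1).comp q.1.2.2.1)).comp
        (q.1.2.2.2.comp q.2.2))
      = phagoJoin κ κ' := by
  rw [phagoJoin, ← Measure.prod_swap, Measure.map_map (by fun_prop) measurable_swap]
  refine Measure.map_congr_of_mem_measurableAtom (by fun_prop) measurable_phagoResult
    (fun z => ?_) _
  simpa [phagoResult] using (SCong.refl _).comp_congr (SCong.compComm _ _)

end PhagoJoin

/-! `μ .id` has type `Measure SLabel.id.T`, which is a measure on `System` only up to unfolding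
`SLabel.T` and its `MeasurableSpace` instance; `rw` and `simp` do not see through that, so the
components of `mcomp` at `.id` are handled through these accessors. -/

def SMeas.idPart (μ : SMeas) : Measure System := μ .id

def SMeas.phPart (μ : SMeas) (n : Name) : Measure (System × System) := μ (.ph n)

def SMeas.phBPart (μ : SMeas) (n : Name) : Measure (Membrane × Membrane × System × System) :=
  μ (.phB n)

lemma mcomp_idPart (ι : Name → ℝ≥0∞) (μ μ' : SMeas) (P Q : System) :
    (mcomp ι μ μ' P Q).idPart = μ.idPart.map (·.comp Q) + μ'.idPart.map (·.comp P)
      + Measure.sum (fun n => (ι n)⁻¹ • phagoJoin (μ.phPart n) (μ'.phBPart n))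
      + Measure.sum (fun n => (ι n)⁻¹ • phagoJoin (μ'.phPart n) (μ.phBPart n)) := by
  have swap n := map_prod_phagoResult_swap (μ'.phPart n) (μ.phBPart n)
  simp only [← swap]
  rfl

lemma mcomp_phPart (ι : Name → ℝ≥0∞) (μ μ' : SMeas) (P Q : System) (n : Name) :
    (mcomp ι μ μ' P Q).phPart n = (μ.phPart n).map (fun p => (p.1, p.2.comp Q))
      + (μ'.phPart n).map (fun p => (p.1, p.2.comp P)) :=
  rfl

lemma mcomp_phBPart (ι : Name → ℝ≥0∞) (μ μ' : SMeas) (P Q : System) (n : Name) :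
    (mcomp ι μ μ' P Q).phBPart n
      = (μ.phBPart n).map (fun p => (p.1, p.2.1, p.2.2.1, p.2.2.2.comp Q))
        + (μ'.phBPart n).map (fun p => (p.1, p.2.1, p.2.2.1, p.2.2.2.comp P)) :=
  rfl

lemma mcomp_comm (ι : Name → ℝ≥0∞) (μ μ' : SMeas) (P Q : System) :
    mcomp ι μ μ' P Q = mcomp ι μ' μ Q P := by
  funext a
  cases a
  case id =>
    change (mcomp ι μ μ' P Q).idPart = (mcomp ι μ' μ Q P).idPart
    rw [mcomp_idPart, mcomp_idPart]
    abel
  all_goals exact add_comm _ _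

lemma mcomp_void (ι : Name → ℝ≥0∞) (μ : SMeas) (P : System) : mcomp ι μ 0 P .void = μ := by
  funext a
  cases a
  case id =>
    change (mcomp ι μ 0 P .void).idPart = μ.idPart
    have h₁ n : phagoJoin (μ.phPart n) (SMeas.phBPart 0 n) = 0 := phagoJoin_zero_right _
    have h₂ n : phagoJoin (SMeas.phPart 0 n) (μ.phBPart n) = 0 := phagoJoin_zero_left _
    have h₃ : (SMeas.idPart 0).map (·.comp P) = 0 := Measure.map_zero _
    rw [mcomp_idPart]
    simp only [h₁, h₂, h₃, smul_zero, Measure.sum_zero, add_zero]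
    exact isAtomAction_comp.map_act_unit _
  case ph =>
    exact (Measure.add_map_zero _ _).trans (isAtomAction_comp.prodSnd.map_act_unit _)
  case phB =>
    exact (Measure.add_map_zero _ _).trans
      (isAtomAction_comp.prodSnd.prodSnd.prodSnd.map_act_unit _)
  case ex =>
    exact (Measure.add_map_zero _ _).trans (isAtomAction_comp.prodSnd.prodSnd.map_act_unit _)

lemma mcomp_congr_left (ι : Name → ℝ≥0∞) (μ μ' : SMeas) {P Q : System} (R : System)
    (h : SCong P Q) : mcomp ι μ μ' P R = mcomp ι μ μ' Q R := by
  have h' := System.mem_measurableAtom.2 h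
  funext a
  cases a
  case id =>
    change (mcomp ι μ μ' P R).idPart = (mcomp ι μ μ' Q R).idPart
    rw [mcomp_idPart, mcomp_idPart, isAtomAction_comp.map_act_congr _ h']
  case ph => exact congrArg (HAdd.hAdd _) (isAtomAction_comp.prodSnd.map_act_congr _ h')
  case phB =>
    exact congrArg (HAdd.hAdd _) (isAtomAction_comp.prodSnd.prodSnd.prodSnd.map_act_congr _ h')
  case ex =>
    exact congrArg (HAdd.hAdd _) (isAtomAction_comp.prodSnd.prodSnd.map_act_congr _ h')

lemma mcomp_idPart_assoc (ι : Name → ℝ≥0∞) (μ₁ μ₂ μ₃ : SMeas) (P Q R : System) :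
    (mcomp ι μ₁ (mcomp ι μ₂ μ₃ Q R) P (Q.comp R)).idPart
      = (mcomp ι (mcomp ι μ₁ μ₂ P Q) μ₃ (P.comp Q) R).idPart := by
  have hP := isAtomAction_comp.measurable P
  have hR := isAtomAction_comp.measurable R
  simp only [mcomp_idPart, mcomp_phPart, mcomp_phBPart, Measure.map_add _ _ hP,
    Measure.map_add _ _ hR, Measure.map_sum_smul hP, Measure.map_sum_smul hR, phagoJoin_add_left,
    phagoJoin_add_right, phagoJoin_map_left, phagoJoin_map_right, smul_add,
    ← Measure.sum_add_sum, isAtomAction_comp.map_map_act]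
  rw [isAtomAction_comp.map_act_congr _ (System.mem_measurableAtom.2 (.compComm R P)),
    isAtomAction_comp.map_act_congr _ (System.mem_measurableAtom.2 (.compComm Q P))]
  abel

lemma mcomp_assoc (ι : Name → ℝ≥0∞) (μ₁ μ₂ μ₃ : SMeas) (P Q R : System) :
    mcomp ι μ₁ (mcomp ι μ₂ μ₃ Q R) P (Q.comp R)
      = mcomp ι (mcomp ι μ₁ μ₂ P Q) μ₃ (P.comp Q) R := by
  have hcomm (X Y : System) : Y.comp X ∈ measurableAtom (X.comp Y) :=
    System.mem_measurableAtom.2 (.compComm X Y)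
  funext a
  cases a
  case id => exact mcomp_idPart_assoc ι μ₁ μ₂ μ₃ P Q R
  case ph => exact isAtomAction_comp.prodSnd.map_act_add_assoc hcomm _ _ _ P Q R
  case phB =>
    exact isAtomAction_comp.prodSnd.prodSnd.prodSnd.map_act_add_assoc hcomm _ _ _ P Q R
  case ex => exact isAtomAction_comp.prodSnd.prodSnd.map_act_add_assoc hcomm _ _ _ P Q R

noncomputable def System.transition (ι : Name → ℝ≥0∞) : System → SMeas
  | .void => 0
  | .cell σ P => mnest ι (P.transition ι) (σ.transition ι) σ P
  | .comp P Q => mcomp ι (P.transition ι) (Q.transition ι) P Q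

lemma strans_iff_eq_transition {ι : Name → ℝ≥0∞} {P : System} {μ : SMeas} :
    STrans ι P μ ↔ μ = P.transition ι := by
  refine ⟨fun h => ?_, ?_⟩
  · induction h with
    | void => rfl
    | cell hσ _ ih => rw [mtrans_iff_eq_transition.1 hσ, ih]; rfl
    | comp _ _ ih₁ ih₂ => rw [ih₁, ih₂]; rfl
  · rintro rfl
    induction P with
    | void => exact .void
    | cell σ P ih => exact .cell (mtrans_iff_eq_transition.2 rfl) ih
    | comp P Q ih₁ ih₂ => exact .comp ih₁ ih₂

lemma System.transition_congr (ι : Name → ℝ≥0∞) {P Q : System} (h : SCong P Q) :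
    P.transition ι = Q.transition ι := by
  induction h with
  | refl => rfl
  | symm _ ih => exact ih.symm
  | trans _ _ ih₁ ih₂ => exact ih₁.trans ih₂
  | compComm P Q => exact mcomp_comm ι _ _ P Q
  | compAssoc P Q R => exact mcomp_assoc ι _ _ _ P Q R
  | compVoid P => exact mcomp_void ι _ P
  | zeroVoid => exact mnest_zero ι
  | comp R h ih =>
    simp only [System.transition, ih]
    exact mcomp_congr_left ι _ _ R h
  | cell hm hs ih =>
    simp only [System.transition, ih, Membrane.transition_congr ι hm]
    exact mnest_congr ι _ _ hm hs

/-- the stochastic transition relation respects structural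
congruence: if M ≡ N and M → μ then N → μ (for both sorts of terms). -/
theorem stochastic_transition_respects_congruence (ι : Name → ℝ≥0∞)
    (hι : ∀ n : Name, 0 < ι n ∧ ι n ≠ ⊤) :
    (∀ (σ τ : Membrane) (μ : MMeas), MCong σ τ → MTrans ι σ μ → MTrans ι τ μ) ∧
    (∀ (P Q : System) (μ : SMeas), SCong P Q → STrans ι P μ → STrans ι Q μ) := by
  refine ⟨fun σ τ μ h hσ => ?_, fun P Q μ h hP => ?_⟩
  · rw [mtrans_iff_eq_transition] at hσ ⊢
    exact hσ.trans (Membrane.transition_congr ι h)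
  · rw [strans_iff_eq_transition] at hP ⊢
    exact hP.trans (System.transition_congr ι h)

end Brane
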